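/- arXiv:2409.08085 — 2 statements merged into one kernel-verified Lean document; each statement's English description precedes it below -/
import Mathlib

section
/- For all integers n ≥ 2, the polynomial h_n(x;t) satisfies the differential recurrence (n-1)(x-1)·h_{n+1}(x;t) = -n(2tx+x+1)·h_n(x;t) + x(x²+4tx+2x+1)·h_n'(x;t), where h_n' denotes the derivative with respect to x. -/
open Polynomial Finset

/-- Speyer's g-polynomial of the uniform matroid `U_{n,d}`, evaluated at `t`. -/
noncomputable def speyerG (n d : ℕ) (t : ℝ) : ℝ :=
  ∑ i ∈ Finset.Icc 1 d,
    ((n - i - 1).choose (d - i) : ℝ) * ((n - d - 1).choose (i - 1) : ℝ) * t ^ i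

/-- The generating polynomial `h_n(x;t) = ∑_{d=1}^{n-1} g_{n,d}(t) x^d` (in `x`). -/
noncomputable def hPoly (n : ℕ) (t : ℝ) : Polynomial ℝ :=
  ∑ d ∈ Finset.Icc 1 (n - 1), Polynomial.C (speyerG n d t) * Polynomial.X ^ d

/-!
Write `i = j + 1`, `d = j + b` and `n = j + b + s + 1`: the coefficient of `t ^ i * x ^ d` in
`h_n` is `C(b + s, b) * C(s, j)`, and Pascal's rule in both factors gives
`g_{n+2,d+1} = g_{n+1,d+1} + g_{n+1,d} + t * g_{n,d}`, that is, the three-term recurrence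
`h_{n+2} = (1 + x) h_{n+1} + t x h_n` for `n ≥ 2`. Modulo this recurrence, the differential
recurrence at `n + 2` is `1 + x` times the one at `n + 1` plus `t x` times the one at `n`, so
it only has to be checked for `n = 2, 3`; for `n ≤ 1` both sides vanish since `h_0 = h_1 = 0`.
-/

theorem choose_mul_choose_pascal (b s j : ℕ) :
    (b + s + 1).choose b * (s + 1).choose j
      = (b + s).choose b * s.choose j
        + (if 1 ≤ b then (b + s).choose (b - 1) * (s + 1).choose j else 0)
        + (if 1 ≤ j then (b + s).choose b * s.choose (j - 1) else 0) := by
  rcases b with _ | b <;> rcases j with _ | j <;>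
    simp [Nat.choose_succ_succ, Nat.add_right_comm _ 1 s] <;> ring

theorem speyerG_zero (n : ℕ) (t : ℝ) : speyerG n 0 t = 0 := by simp [speyerG]

theorem speyerG_eq_zero_of_le {n d : ℕ} (hn : 2 ≤ n) (hnd : n ≤ d) (t : ℝ) :
    speyerG n d t = 0 := by
  refine sum_eq_zero fun i hi => ?_
  obtain ⟨hi1, -⟩ := mem_Icc.mp hi
  rcases hi1.eq_or_lt with rfl | hi1
  · rw [Nat.choose_eq_zero_of_lt (by omega : n - 1 - 1 < d - 1)]; simp
  · rw [show n - d - 1 = 0 by omega, Nat.choose_eq_zero_of_lt (by omega : 0 < i - 1)]; simp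

theorem speyerG_succ_self (m : ℕ) (t : ℝ) : speyerG (m + 2) (m + 1) t = t := by
  rw [speyerG, sum_eq_single 1]
  · simp
  · intro i hi hi1
    rw [mem_Icc] at hi
    simp [Nat.choose_eq_zero_of_lt (by omega : 0 < i - 1)]
  · simp

/- The guards mirror the summation ranges: `speyerG (n + 1) d` has no `t ^ (d + 1)` term and
`t * speyerG n d` has no `t ^ 1` term. -/
theorem choose_mul_choose_sub_pascal {n d i : ℕ} (hd : d < n) (hi : i ∈ Icc 1 (d + 1)) :
    (n + 2 - i - 1).choose (d + 1 - i) * (n + 2 - (d + 1) - 1).choose (i - 1)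
      = (n + 1 - i - 1).choose (d + 1 - i) * (n + 1 - (d + 1) - 1).choose (i - 1)
        + (if i ≤ d then (n + 1 - i - 1).choose (d - i) * (n + 1 - d - 1).choose (i - 1) else 0)
        + (if 2 ≤ i then (n - (i - 1) - 1).choose (d - (i - 1)) * (n - d - 1).choose (i - 1 - 1)
            else 0) := by
  rw [mem_Icc] at hi
  obtain ⟨j, rfl⟩ : ∃ j, i = j + 1 := ⟨i - 1, by omega⟩
  obtain ⟨b, rfl⟩ : ∃ b, d = j + b := ⟨d - j, by omega⟩
  obtain ⟨s, rfl⟩ : ∃ s, n = j + b + s + 1 := ⟨n - (j + b) - 1, by omega⟩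
  have key := choose_mul_choose_pascal b s j
  rw [show j + b + s + 1 + 2 - (j + 1) - 1 = b + s + 1 by omega,
    show j + b + s + 1 + 2 - (j + b + 1) - 1 = s + 1 by omega,
    show j + b + s + 1 + 1 - (j + 1) - 1 = b + s by omega,
    show j + b + s + 1 + 1 - (j + b + 1) - 1 = s by omega,
    show j + b + s + 1 + 1 - (j + b) - 1 = s + 1 by omega,
    show j + b + s + 1 - (j + 1 - 1) - 1 = b + s by omega,
    show j + b + s + 1 - (j + b) - 1 = s by omega]
  simpa [Nat.add_sub_add_left] using key

theorem speyerG_succ_succ_of_lt {n d : ℕ} (hd : d < n) (t : ℝ) :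
    speyerG (n + 2) (d + 1) t
      = speyerG (n + 1) (d + 1) t + speyerG (n + 1) d t + t * speyerG n d t := by
  have extend : speyerG (n + 1) d t = ∑ i ∈ Icc 1 (d + 1),
      if i ≤ d then
        ((n + 1 - i - 1).choose (d - i) * (n + 1 - d - 1).choose (i - 1) : ℝ) * t ^ i
      else 0 := by
    rw [← sum_filter, speyerG]
    congr 1
    ext i
    simp only [mem_filter, mem_Icc]
    omega
  have shift : t * speyerG n d t = ∑ i ∈ Icc 1 (d + 1),
      if 2 ≤ i then
        ((n - (i - 1) - 1).choose (d - (i - 1)) * (n - d - 1).choose (i - 1 - 1) : ℝ) * t ^ i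
      else 0 := by
    rw [← sum_filter, speyerG, mul_sum,
      show (Icc 1 (d + 1)).filter (2 ≤ ·) = (Icc 1 d).map (addRightEmbedding 1) by
        rw [map_add_right_Icc]; ext i; simp only [mem_filter, mem_Icc]; omega,
      sum_map]
    refine sum_congr rfl fun i _ => ?_
    simp only [addRightEmbedding_apply, Nat.add_sub_cancel]
    ring
  rw [extend, shift, speyerG, speyerG, ← sum_add_distrib, ← sum_add_distrib]
  refine sum_congr rfl fun i hi => ?_
  have key := congrArg (fun m : ℕ => (m : ℝ) * t ^ i) (choose_mul_choose_sub_pascal hd hi)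
  simp only [Nat.cast_add, Nat.cast_mul, Nat.cast_ite, Nat.cast_zero] at key
  split_ifs at key ⊢ <;> linear_combination key

theorem speyerG_succ_succ {n : ℕ} (hn : 2 ≤ n) (d : ℕ) (t : ℝ) :
    speyerG (n + 2) (d + 1) t
      = speyerG (n + 1) (d + 1) t + speyerG (n + 1) d t + t * speyerG n d t := by
  rcases lt_or_ge d n with hd | hd
  · exact speyerG_succ_succ_of_lt hd t
  rcases hd.eq_or_lt with rfl | hd
  · obtain ⟨m, rfl⟩ : ∃ m, n = m + 1 := ⟨n - 1, by omega⟩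
    rw [speyerG_succ_self, speyerG_succ_self, speyerG_eq_zero_of_le (by omega) le_rfl,
      speyerG_eq_zero_of_le hn le_rfl]
    ring
  · rw [speyerG_eq_zero_of_le (by omega) (by omega), speyerG_eq_zero_of_le (by omega) (by omega),
      speyerG_eq_zero_of_le (by omega) (by omega), speyerG_eq_zero_of_le hn hd.le]
    ring

theorem coeff_hPoly {n : ℕ} (hn : 2 ≤ n) (t : ℝ) (k : ℕ) :
    (hPoly n t).coeff k = speyerG n k t := by
  simp only [hPoly, finsetSum_coeff, coeff_C_mul_X_pow]
  rw [sum_ite_eq]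
  split_ifs with hk
  · rfl
  · rw [mem_Icc] at hk
    rcases k.eq_zero_or_pos with rfl | hk0
    · exact (speyerG_zero n t).symm
    · exact (speyerG_eq_zero_of_le hn (by omega) t).symm

theorem hPoly_add_two {n : ℕ} (hn : 2 ≤ n) (t : ℝ) :
    hPoly (n + 2) t = (1 + X) * hPoly (n + 1) t + C t * X * hPoly n t := by
  ext (_ | k)
  · simp [coeff_hPoly hn, coeff_hPoly (show 2 ≤ n + 1 by omega),
      coeff_hPoly (show 2 ≤ n + 2 by omega), speyerG_zero]
  · simp only [coeff_add, add_mul, one_mul, mul_assoc, coeff_C_mul, coeff_X_mul]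
    rw [coeff_hPoly (by omega), coeff_hPoly (by omega), coeff_hPoly (by omega), coeff_hPoly hn,
      speyerG_succ_succ hn]

theorem hPoly_two (t : ℝ) : hPoly 2 t = C t * X := by
  norm_num [hPoly, speyerG]

theorem hPoly_three (t : ℝ) : hPoly 3 t = C t * X + C t * X ^ 2 := by
  norm_num [hPoly, speyerG, sum_Icc_succ_top]

section DiffRec

variable {R : Type*} [CommRing R]

def DiffRecAt (p : ℕ → R[X]) (t : R) (n : ℕ) : Prop :=
  C ((n : R) - 1) * (X - 1) * p (n + 1)
    = -C (n : R) * (C (2 * t) * X + X + 1) * p n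
      + X * (X ^ 2 + C (4 * t) * X + 2 * X + 1) * derivative (p n)

theorem DiffRecAt.add_two {p : ℕ → R[X]} {t : R} {n : ℕ}
    (hrec₁ : p (n + 2) = (1 + X) * p (n + 1) + C t * X * p n)
    (hrec₂ : p (n + 3) = (1 + X) * p (n + 2) + C t * X * p (n + 1))
    (h₀ : DiffRecAt p t n) (h₁ : DiffRecAt p t (n + 1)) : DiffRecAt p t (n + 2) := by
  unfold DiffRecAt at *
  rw [hrec₂, hrec₁]
  rw [hrec₁] at h₁
  simp only [derivative_add, derivative_mul, derivative_one, derivative_X, derivative_C,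
    map_sub, map_mul, map_natCast, map_ofNat, map_one] at h₀ h₁ ⊢
  push_cast at h₀ h₁ ⊢
  linear_combination (1 + X) * h₁ + C t * X * h₀

end DiffRec

theorem hPoly_diffRecAt_add_two (t : ℝ) (k : ℕ) : DiffRecAt (hPoly · t) t (k + 2) := by
  induction k using Nat.twoStepInduction with
  | zero | one =>
    simp only [DiffRecAt, Nat.reduceAdd, hPoly_add_two le_rfl, hPoly_two, hPoly_three,
      derivative_mul, derivative_add, derivative_C, derivative_X, derivative_X_pow, map_sub,
      map_mul, map_natCast, map_ofNat, map_one]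
    push_cast
    ring
  | more k h₀ h₁ =>
    exact DiffRecAt.add_two (hPoly_add_two (by omega) t) (hPoly_add_two (by omega) t) h₀ h₁

theorem hPoly_diff_rec_general (n : ℕ) (t : ℝ) :
    Polynomial.C ((n : ℝ) - 1) * (Polynomial.X - 1) * hPoly (n + 1) t
      = - Polynomial.C (n : ℝ) * (Polynomial.C (2 * t) * Polynomial.X + Polynomial.X + 1) * hPoly n t
        + Polynomial.X * (Polynomial.X ^ 2 + Polynomial.C (4 * t) * Polynomial.X + 2 * Polynomial.X + 1)
          * Polynomial.derivative (hPoly n t) := by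
  match n with
  | 0 | 1 => simp [hPoly]
  | k + 2 => exact hPoly_diffRecAt_add_two t k

theorem hPoly_diff_rec (n : ℕ) (hn : 2 ≤ n) (t : ℝ) :
    Polynomial.C ((n : ℝ) - 1) * (Polynomial.X - 1) * hPoly (n + 1) t
      = - Polynomial.C (n : ℝ) * (Polynomial.C (2 * t) * Polynomial.X + Polynomial.X + 1) * hPoly n t
        + Polynomial.X * (Polynomial.X ^ 2 + Polynomial.C (4 * t) * Polynomial.X + 2 * Polynomial.X + 1)
          * Polynomial.derivative (hPoly n t) :=
  hPoly_diff_rec_general n t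
end

section
/- For t > 0 and n ≥ 2, the mean of the coefficient distribution of h_n(x;t) equals n/2; that is, h_n'(1;t)/h_n(1;t) = n/2, where the derivative is with respect to x. -/
open Polynomial Finset

/-!
The coefficients of `h_n` are palindromic, `g_{n,n-d} = g_{n,d}`: after discarding the vanishing
terms, the `i`-th summands of both sides are products of binomial coefficients that both equal
the multinomial coefficient `(a+b+c)! / (a! b! c!)` with `a = i - 1`, `b = d - i`,
`c = n - d - i`. A positive palindromic weight on `{1, …, n-1}` has its mean at the centre `n/2`.
-/

theorem Nat.choose_mul_choose_swap (a b c : ℕ) :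
    (a + b + c).choose b * (a + c).choose a = (a + b + c).choose c * (a + b).choose a := by
  have hc := Nat.choose_mul (n := a + b + c) (Nat.le_add_right a c)
  have hb := Nat.choose_mul (n := a + b + c) (Nat.le_add_right a b)
  rw [show a + b + c - a = b + c by omega, Nat.add_sub_cancel_left] at hc hb
  rw [Nat.choose_symm_of_eq_add (show a + b + c = b + (a + c) by omega),
    Nat.choose_symm_of_eq_add (show a + b + c = c + (a + b) by omega), hc, hb,
    Nat.choose_symm_add]

theorem Finset.sum_Icc_reflect {M : Type*} [AddCommMonoid M] (f : ℕ → M) (a b : ℕ) :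
    ∑ d ∈ Icc a b, f (a + b - d) = ∑ d ∈ Icc a b, f d := by
  refine sum_nbij' (fun d ↦ a + b - d) (fun d ↦ a + b - d) ?_ ?_ ?_ ?_ (fun _ _ ↦ rfl) <;>
    intro d hd <;> simp only [mem_Icc] at hd ⊢ <;> omega

theorem Finset.two_mul_sum_Icc_mul_eq_of_reflect {R : Type*} [CommRing R] {f : ℕ → R} {a b : ℕ}
    (hf : ∀ d ∈ Icc a b, f (a + b - d) = f d) :
    2 * ∑ d ∈ Icc a b, (d : R) * f d = (a + b : ℕ) * ∑ d ∈ Icc a b, f d := by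
  have hreflect : ∑ d ∈ Icc a b, (d : R) * f d = ∑ d ∈ Icc a b, ((a + b - d : ℕ) : R) * f d := by
    rw [← sum_Icc_reflect]
    refine sum_congr rfl fun d hd ↦ ?_
    rw [hf d hd]
  rw [two_mul]
  nth_rw 2 [hreflect]
  rw [← sum_add_distrib, mul_sum]
  refine sum_congr rfl fun d hd ↦ ?_
  rw [Nat.cast_sub (by simp only [mem_Icc] at hd; omega)]
  ring

namespace Polynomial

variable {R : Type*} [CommSemiring R]

theorem eval_one_sum_C_mul_X_pow (s : Finset ℕ) (a : ℕ → R) :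
    (∑ d ∈ s, C (a d) * X ^ d).eval 1 = ∑ d ∈ s, a d := by
  simp [eval_finsetSum]

theorem eval_one_derivative_sum_C_mul_X_pow (s : Finset ℕ) (a : ℕ → R) :
    (derivative (∑ d ∈ s, C (a d) * X ^ d)).eval 1 = ∑ d ∈ s, (d : R) * a d := by
  rw [derivative_sum, eval_finsetSum]
  refine sum_congr rfl fun d _ ↦ ?_
  rw [derivative_C_mul_X_pow, eval_C_mul, eval_pow, eval_X, one_pow, mul_one, mul_comm]

end Polynomial

section speyerG

variable {n d : ℕ}

theorem speyerG_eq_sum_Icc_min (hdn : d < n) (t : ℝ) :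
    speyerG n d t = ∑ i ∈ Icc 1 (min d (n - d)),
      ((n - i - 1).choose (d - i) : ℝ) * ((n - d - 1).choose (i - 1) : ℝ) * t ^ i := by
  refine (sum_subset (Icc_subset_Icc_right (min_le_left _ _)) fun i hi hi' ↦ ?_).symm
  simp only [mem_Icc] at hi hi'
  rw [Nat.choose_eq_zero_of_lt (by omega : n - d - 1 < i - 1)]
  simp

theorem speyerG_coeff_reflect {i : ℕ} (hi : 1 ≤ i) (hid : i ≤ d) (hin : i ≤ n - d) :
    (n - i - 1).choose (n - d - i) * (d - 1).choose (i - 1)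
      = (n - i - 1).choose (d - i) * (n - d - 1).choose (i - 1) := by
  obtain ⟨a, rfl⟩ : ∃ a, i = a + 1 := ⟨i - 1, by omega⟩
  obtain ⟨b, rfl⟩ : ∃ b, d = a + 1 + b := ⟨d - (a + 1), by omega⟩
  obtain ⟨c, rfl⟩ : ∃ c, n = a + 1 + b + (a + 1) + c := ⟨n - (a + 1 + b) - (a + 1), by omega⟩
  rw [show a + 1 + b + (a + 1) + c - (a + 1) - 1 = a + b + c by omega,
    show a + 1 + b + (a + 1) + c - (a + 1 + b) - (a + 1) = c by omega,
    show a + 1 + b + (a + 1) + c - (a + 1 + b) - 1 = a + c by omega,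
    show a + 1 + b - (a + 1) = b by omega, show a + 1 + b - 1 = a + b by omega,
    Nat.add_sub_cancel, Nat.choose_mul_choose_swap]

theorem speyerG_reflect (hd : 1 ≤ d) (hdn : d < n) (t : ℝ) :
    speyerG n (n - d) t = speyerG n d t := by
  rw [speyerG_eq_sum_Icc_min (by omega), speyerG_eq_sum_Icc_min hdn,
    Nat.sub_sub_self hdn.le, min_comm]
  refine sum_congr rfl fun i hi ↦ ?_
  simp only [mem_Icc, le_min_iff] at hi
  rw [← Nat.cast_mul, ← Nat.cast_mul,
    speyerG_coeff_reflect (n := n) hi.1 hi.2.1 hi.2.2]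

theorem speyerG_pos {t : ℝ} (ht : 0 < t) (hd : 1 ≤ d) (hdn : d < n) : 0 < speyerG n d t := by
  refine sum_pos' (fun i _ ↦ by positivity) ⟨1, mem_Icc.mpr ⟨le_rfl, hd⟩, ?_⟩
  have : 0 < (n - 1 - 1).choose (d - 1) := Nat.choose_pos (by omega)
  simp only [Nat.sub_self, Nat.choose_zero_right, Nat.cast_one, mul_one, pow_one]
  positivity

end speyerG

theorem hPoly_mean (t : ℝ) (ht : 0 < t) (n : ℕ) (hn : 2 ≤ n) :
    (Polynomial.derivative (hPoly n t)).eval 1 / (hPoly n t).eval 1 = (n : ℝ) / 2 := by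
  have hcentre : 1 + (n - 1) = n := by omega
  have hsymm : ∀ d ∈ Icc 1 (n - 1), speyerG n (1 + (n - 1) - d) t = speyerG n d t := by
    intro d hd
    rw [mem_Icc] at hd
    rw [hcentre, speyerG_reflect hd.1 (by omega)]
  have hpos : 0 < ∑ d ∈ Icc 1 (n - 1), speyerG n d t := by
    refine sum_pos (fun d hd ↦ ?_) ⟨1, mem_Icc.mpr ⟨le_rfl, by omega⟩⟩
    rw [mem_Icc] at hd
    exact speyerG_pos ht hd.1 (by omega)
  have hmean := two_mul_sum_Icc_mul_eq_of_reflect (f := fun d ↦ speyerG n d t) hsymm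
  rw [hcentre] at hmean
  rw [hPoly, eval_one_sum_C_mul_X_pow, eval_one_derivative_sum_C_mul_X_pow,
    div_eq_div_iff hpos.ne' two_ne_zero]
  linarith
end
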